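/- arXiv:1906.09129 — 2 statements merged into one kernel-verified Lean document; each statement's English description precedes it below -/
import Mathlib

section
/- Let Ω be a bounded subset of a real Hilbert space H and (λ_n) ⊂ (0,1). For each p ∈ Ω let (s_{n,p}), (v_{n,p}), (r_{n,p}), (γ_{n,p}) be real sequences with (s_{n,p}), (γ_{n,p}) ⊂ [0,∞), such that for all p ∈ Ω and all m ∈ ℕ, s_{m+1,p} ≤ (1 − λ_m)(s_{m,p} + v_{m,p}) + λ_m r_{m,p} + γ_{m,p}. Let D ∈ ℕ and monotone functions L, G : ℕ → ℕ and a monotone functional Ψ : ℕ × ℕ^ℕ → ℕ satisfy: (i) ∑_{i=1}^{L(k)} λ_i ≥ k for all k; (ii) 0 < s_{n,p} ≤ D can fail but D ≥ 1 is an upper bound on (s_{n,p}) for all p ∈ Ω and n; (iii) for all p ∈ Ω and k, n ∈ ℕ, ∑_{i=G(k)+1}^{G(k)+n} γ_{i,p} ≤ 1/(k+1); (iv) for all k ∈ ℕ and all monotone f : ℕ → ℕ there exist p ∈ Ω and n ≤ Ψ(k,f) such that for all m ∈ [n, f(n)], v_{m,p} ≤ 1/(f(n)+1) and r_{m,p}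 ≤ 1/(k+1). Then for every k ∈ ℕ and every monotone f : ℕ → ℕ there are p ∈ Ω and n ≤ Θ(k,f) such that s_{m,p} ≤ 1/(k+1) for all m ∈ [n, f(n)], where Θ(k,f) := L(h(Ψ(4k+3, g))) + 1, h(m) := max{m, G(4k+3)+1} + ⌈ln(4D(k+1))⌉ and g(m) := 4(k+1)(f(L(h(m))+1)+1). -/
/-!
Apply (iv) at precision `4k+3` to the rate `g`, obtaining `p` and `n₀`; put `ε = 1/(4(k+1))`,
`a = max n₀ (G(4k+3)+1)` and `n = L(h(n₀)) + 1`. For `m ∈ [n, f n]`, unrolling the recursion from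
`a` bounds `s_m` by `∏_{[a,m)} (1 - λ_i) · D + (m - a) · ε/(f n + 1) + ε + ∑_{[a,m)} γ_i`.
Since `1 - λ ≤ e^{-λ}` and, by the choice of `L`, `∑_{[a,m)} λ_i ≥ ⌈ln(4D(k+1))⌉`, the product
term is at most `ε`; the second term is at most `ε` because `m ≤ f n`; the `γ`-sum lies beyond
`G(4k+3)`, so it is at most `ε` by (iii). Hence `s_m ≤ 4ε = 1/(k+1)`.
-/

/-- `g ≤* f` : strong majorization for functions `ℕ → ℕ`. -/
def FunMaj (g f : ℕ → ℕ) : Prop := ∀ n : ℕ, ∀ m ≤ n, g m ≤ f n ∧ f m ≤ f n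

/-- A functional `Φ : ℕ × ℕ^ℕ → ℕ` is monotone. -/
def MonotoneFunctional (Φ : ℕ → (ℕ → ℕ) → ℕ) : Prop :=
  ∀ n : ℕ, ∀ f : ℕ → ℕ, ∀ m ≤ n, ∀ g : ℕ → ℕ, FunMaj g f → Φ m g ≤ Φ n f

/-- `h(m) := max{m, G(4k+3)+1} + ⌈ln(4D(k+1))⌉`. -/
noncomputable def hXu (G : ℕ → ℕ) (D k m : ℕ) : ℕ :=
  max m (G (4*k+3) + 1) + ⌈Real.log (4 * (D:ℝ) * ((k:ℝ)+1))⌉₊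

/-- `g(m) := 4(k+1)(f(L(h(m))+1)+1)`. -/
noncomputable def gXu (L G : ℕ → ℕ) (D k : ℕ) (f : ℕ → ℕ) (m : ℕ) : ℕ :=
  4 * (k+1) * (f (L (hXu G D k m) + 1) + 1)

/-- `Θ(k,f) := L(h(Ψ(4k+3,g))) + 1`. -/
noncomputable def ThetaXu (L G : ℕ → ℕ) (Ψ : ℕ → (ℕ → ℕ) → ℕ) (D k : ℕ) (f : ℕ → ℕ) : ℕ :=
  L (hXu G D k (Ψ (4*k+3) (gXu L G D k f))) + 1

open Finset

theorem prod_one_sub_le_exp_neg_sum {ι : Type*} (t : Finset ι) (x : ι → ℝ)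
    (hx : ∀ i ∈ t, x i ≤ 1) : ∏ i ∈ t, (1 - x i) ≤ Real.exp (-∑ i ∈ t, x i) := by
  rw [← sum_neg_distrib, Real.exp_sum]
  exact prod_le_prod (fun i hi => sub_nonneg.2 (hx i hi)) fun i _ => Real.one_sub_le_exp_neg _

section Recursion

variable (s v r γ lam : ℕ → ℝ)

theorem le_prod_one_sub_mul_add_of_rec {V R S : ℝ} {a : ℕ}
    (hlam0 : ∀ i, 0 ≤ lam i) (hlam1 : ∀ i, lam i ≤ 1) (hγ : ∀ i, 0 ≤ γ i)
    (hV : 0 ≤ V) (hR : 0 ≤ R) (hsa : s a ≤ S)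
    (hrec : ∀ i, s (i + 1) ≤ (1 - lam i) * (s i + v i) + lam i * r i + γ i) :
    ∀ m, a ≤ m → (∀ i ∈ Ico a m, v i ≤ V) → (∀ i ∈ Ico a m, r i ≤ R) →
      s m ≤ (∏ i ∈ Ico a m, (1 - lam i)) * S + ((m : ℝ) - a) * V + R + ∑ i ∈ Ico a m, γ i := by
  intro m ham
  induction m, ham using Nat.le_induction with
  | base => simpa using hsa.trans (le_add_of_nonneg_right hR)
  | succ m ham ih =>
    intro hv hr
    have hsub : Ico a m ⊆ Ico a (m + 1) := Ico_subset_Ico_right m.le_succ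
    have hmem : m ∈ Ico a (m + 1) := mem_Ico.2 ⟨ham, m.lt_succ_self⟩
    have IH := ih (fun i hi => hv i (hsub hi)) (fun i hi => hr i (hsub hi))
    have hΓ : 0 ≤ ∑ i ∈ Ico a m, γ i := sum_nonneg fun i _ => hγ i
    have hma : (0 : ℝ) ≤ (m : ℝ) - a := sub_nonneg.2 (Nat.cast_le.2 ham)
    have hstep : s (m + 1) ≤ (1 - lam m) * (((∏ i ∈ Ico a m, (1 - lam i)) * S
        + ((m : ℝ) - a) * V + R + ∑ i ∈ Ico a m, γ i) + V) + lam m * R + γ m := by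
      have h1lam := sub_nonneg.2 (hlam1 m)
      calc s (m + 1) ≤ (1 - lam m) * (s m + v m) + lam m * r m + γ m := hrec m
        _ ≤ _ := by gcongr; exacts [hv m hmem, hlam0 m, hr m hmem]
    rw [prod_Ico_succ_top ham, sum_Ico_succ_top ham]
    push_cast
    nlinarith [mul_nonneg (hlam0 m) hΓ, mul_nonneg (hlam0 m) (mul_nonneg hma hV), hlam0 m]

theorem le_four_mul_of_window {a m M : ℕ} {D ε : ℝ}
    (hlam0 : ∀ i, 0 ≤ lam i) (hlam1 : ∀ i, lam i ≤ 1) (hγ : ∀ i, 0 ≤ γ i)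
    (hrec : ∀ i, s (i + 1) ≤ (1 - lam i) * (s i + v i) + lam i * r i + γ i)
    (hD : 0 ≤ D) (hε : 0 < ε) (ham : a ≤ m) (hmM : m ≤ M) (hsa : s a ≤ D)
    (hv : ∀ i ∈ Ico a m, v i ≤ ε / (M + 1)) (hr : ∀ i ∈ Ico a m, r i ≤ ε)
    (hlam : Real.log (D / ε) ≤ ∑ i ∈ Ico a m, lam i) (hγsum : ∑ i ∈ Ico a m, γ i ≤ ε) :
    s m ≤ 4 * ε := by
  have hbound := le_prod_one_sub_mul_add_of_rec s v r γ lam hlam0 hlam1 hγ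
    (by positivity) hε.le hsa hrec m ham hv hr
  have hprod : (∏ i ∈ Ico a m, (1 - lam i)) * D ≤ ε := by
    have hexp : D ≤ ε * Real.exp (∑ i ∈ Ico a m, lam i) := by
      rw [← div_le_iff₀' hε]
      exact (Real.le_exp_log _).trans (Real.exp_le_exp.2 hlam)
    calc (∏ i ∈ Ico a m, (1 - lam i)) * D
        ≤ Real.exp (-∑ i ∈ Ico a m, lam i) * D := by
          gcongr
          exact prod_one_sub_le_exp_neg_sum _ _ fun i _ => hlam1 i
      _ ≤ ε := by
          rw [Real.exp_neg, inv_mul_le_iff₀ (Real.exp_pos _)]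
          linarith
  have herr : ((m : ℝ) - a) * (ε / (M + 1)) ≤ ε := by
    have hmM' : (m : ℝ) - a ≤ M := by
      have : (m : ℝ) ≤ M := by exact_mod_cast hmM
      linarith [(Nat.cast_nonneg a : (0 : ℝ) ≤ a)]
    rw [mul_div_assoc', div_le_iff₀ (by positivity)]
    nlinarith
  linarith

end Recursion

theorem natCast_le_of_le_sum_Icc {lam : ℕ → ℝ} (hlam1 : ∀ i, lam i ≤ 1) {k K : ℕ}
    (h : (k : ℝ) ≤ ∑ i ∈ Icc 1 K, lam i) : k ≤ K := by
  have : ∑ i ∈ Icc 1 K, lam i ≤ K := by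
    simpa using sum_le_card_nsmul (Icc 1 K) lam 1 fun i _ => hlam1 i
  exact_mod_cast h.trans this

theorem natCast_le_sum_Ico_of_le_sum_Icc {lam : ℕ → ℝ} (hlam0 : ∀ i, 0 ≤ lam i)
    (hlam1 : ∀ i, lam i ≤ 1) {a c K m : ℕ} (ham : a ≤ m) (hKm : K < m)
    (h : ((a + c : ℕ) : ℝ) ≤ ∑ i ∈ Icc 1 K, lam i) : (c : ℝ) ≤ ∑ i ∈ Ico a m, lam i := by
  have hKsub : Icc 1 K ⊆ range m := fun i hi => mem_range.2 (by grind)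
  have hhead : ∑ i ∈ range a, lam i ≤ a := by
    simpa using sum_le_card_nsmul (range a) lam 1 fun i _ => hlam1 i
  have hle := sum_le_sum_of_subset_of_nonneg hKsub fun i _ _ => hlam0 i
  have hsplit := sum_range_add_sum_Ico lam ham
  push_cast at h
  linarith

theorem sum_Ico_le_of_sum_Icc_le {γ : ℕ → ℝ} (hγ : ∀ i, 0 ≤ γ i) {G a m : ℕ} {ε : ℝ}
    (hGa : G < a) (htail : ∀ n, ∑ i ∈ Icc (G + 1) (G + n), γ i ≤ ε) :
    ∑ i ∈ Ico a m, γ i ≤ ε := by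
  refine (sum_le_sum_of_subset_of_nonneg ?_ fun i _ _ => hγ i).trans (htail m)
  intro i hi
  simp only [mem_Ico, mem_Icc] at hi ⊢
  omega

theorem hXu_monotone (G : ℕ → ℕ) (D k : ℕ) : Monotone (hXu G D k) :=
  fun _ _ hmn => Nat.add_le_add_right (max_le_max hmn le_rfl) _

theorem gXu_monotone {L G f : ℕ → ℕ} (hL : Monotone L) (hf : Monotone f) (D k : ℕ) :
    Monotone (gXu L G D k f) :=
  fun _ _ hmn => Nat.mul_le_mul_left _ (Nat.succ_le_succ (hf (Nat.succ_le_succ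
    (hL (hXu_monotone G D k hmn)))))

theorem one_div_gXu_add_one_le (L G f : ℕ → ℕ) (D k m : ℕ) :
    1 / ((gXu L G D k f m : ℝ) + 1)
      ≤ 1 / (((4 * k + 3 : ℕ) : ℝ) + 1) / ((f (L (hXu G D k m) + 1) : ℝ) + 1) := by
  rw [div_div, gXu]
  apply one_div_le_one_div_of_le (by positivity)
  push_cast
  nlinarith

theorem quantitative_xu_lemma_families_general
    {H : Type*}
    (Ω : Set H)
    (lam : ℕ → ℝ) (hlam : ∀ n, lam n ∈ Set.Ioo (0:ℝ) 1)
    (s v r γ : ℕ → H → ℝ)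
    (hγ0 : ∀ p ∈ Ω, ∀ n, 0 ≤ γ n p)
    (hrec : ∀ p ∈ Ω, ∀ m : ℕ,
      s (m+1) p ≤ (1 - lam m) * (s m p + v m p) + lam m * r m p + γ m p)
    (D : ℕ)
    (L G : ℕ → ℕ) (hL : Monotone L)
    (Ψ : ℕ → (ℕ → ℕ) → ℕ)
    (hi : ∀ k : ℕ, (k : ℝ) ≤ ∑ i ∈ Finset.Icc 1 (L k), lam i)
    (hii : ∀ p ∈ Ω, ∀ n, s n p ≤ (D : ℝ))
    (hiii : ∀ p ∈ Ω, ∀ k n : ℕ,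
      ∑ i ∈ Finset.Icc (G k + 1) (G k + n), γ i p ≤ 1 / ((k:ℝ)+1))
    (hiv : ∀ k : ℕ, ∀ f : ℕ → ℕ, Monotone f → ∃ p ∈ Ω, ∃ n ≤ Ψ k f,
      ∀ m : ℕ, n ≤ m → m ≤ f n →
        v m p ≤ 1 / ((f n : ℝ) + 1) ∧ r m p ≤ 1 / ((k:ℝ)+1)) :
    ∀ k : ℕ, ∀ f : ℕ → ℕ, Monotone f → ∃ p ∈ Ω, ∃ n ≤ ThetaXu L G Ψ D k f,
      ∀ m : ℕ, n ≤ m → m ≤ f n → s m p ≤ 1 / ((k:ℝ)+1) := by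
  intro k f hf
  have hlam0 i : 0 ≤ lam i := (hlam i).1.le
  have hlam1 i : lam i ≤ 1 := (hlam i).2.le
  obtain ⟨p, hp, n₀, hn₀, hwin⟩ := hiv (4 * k + 3) (gXu L G D k f) (gXu_monotone hL hf D k)
  set a := max n₀ (G (4 * k + 3) + 1)
  set N := hXu G D k n₀
  set ε : ℝ := 1 / (((4 * k + 3 : ℕ) : ℝ) + 1)
  refine ⟨p, hp, L N + 1, Nat.succ_le_succ (hL (hXu_monotone G D k hn₀)), fun m hnm hmf => ?_⟩
  have hNL : N ≤ L N := natCast_le_of_le_sum_Icc hlam1 (hi N)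
  have hn₀a : n₀ ≤ a := le_max_left _ _
  have ham : a ≤ m := by have : a ≤ N := Nat.le_add_right _ _; omega
  have hε4 : 4 * ε = 1 / ((k : ℝ) + 1) := by simp only [ε]; push_cast; field_simp; ring
  have hDε : (D : ℝ) / ε = 4 * D * (k + 1) := by simp only [ε]; push_cast; field_simp; ring
  have hwin' : ∀ i ∈ Ico a m, v i p ≤ 1 / ((gXu L G D k f n₀ : ℝ) + 1) ∧ r i p ≤ ε := by
    intro i hiw
    have hfg : f (L N + 1) < gXu L G D k f n₀ :=
      Nat.lt_of_lt_of_le (Nat.lt_succ_self _) (Nat.le_mul_of_pos_left _ (by positivity))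
    exact hwin i (hn₀a.trans (mem_Ico.1 hiw).1) (by grind)
  rw [← hε4]
  refine le_four_mul_of_window (fun i => s i p) (fun i => v i p) (fun i => r i p)
    (fun i => γ i p) lam hlam0 hlam1 (hγ0 p hp) (hrec p hp) (Nat.cast_nonneg D)
    (by positivity) ham hmf (hii p hp a) (fun i hiw => ?_) (fun i hiw => ?_) ?_
    (sum_Ico_le_of_sum_Icc_le (hγ0 p hp) (le_max_right n₀ _) (hiii p hp (4 * k + 3)))
  · exact (hwin' i hiw).1.trans (one_div_gXu_add_one_le L G f D k n₀)
  · exact (hwin' i hiw).2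
  · rw [hDε]
    exact (Nat.le_ceil _).trans
      (natCast_le_sum_Ico_of_le_sum_Icc hlam0 hlam1 ham (by omega) (hi N))

/-- Lemma 3.6: quantitative Xu lemma for families indexed by points of a bounded set. -/
theorem quantitative_xu_lemma_families
    {H : Type*} [NormedAddCommGroup H] [InnerProductSpace ℝ H] [CompleteSpace H]
    (Ω : Set H) (hΩ : Bornology.IsBounded Ω)
    (lam : ℕ → ℝ) (hlam : ∀ n, lam n ∈ Set.Ioo (0:ℝ) 1)
    (s v r γ : ℕ → H → ℝ)
    (hs0 : ∀ p ∈ Ω, ∀ n, 0 ≤ s n p)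
    (hγ0 : ∀ p ∈ Ω, ∀ n, 0 ≤ γ n p)
    (hrec : ∀ p ∈ Ω, ∀ m : ℕ,
      s (m+1) p ≤ (1 - lam m) * (s m p + v m p) + lam m * r m p + γ m p)
    (D : ℕ) (hD : 0 < D)
    (L G : ℕ → ℕ) (hL : Monotone L) (hG : Monotone G)
    (Ψ : ℕ → (ℕ → ℕ) → ℕ) (hΨ : MonotoneFunctional Ψ)
    (hi : ∀ k : ℕ, (k : ℝ) ≤ ∑ i ∈ Finset.Icc 1 (L k), lam i)
    (hii : ∀ p ∈ Ω, ∀ n, s n p ≤ (D : ℝ))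
    (hiii : ∀ p ∈ Ω, ∀ k n : ℕ,
      ∑ i ∈ Finset.Icc (G k + 1) (G k + n), γ i p ≤ 1 / ((k:ℝ)+1))
    (hiv : ∀ k : ℕ, ∀ f : ℕ → ℕ, Monotone f → ∃ p ∈ Ω, ∃ n ≤ Ψ k f,
      ∀ m : ℕ, n ≤ m → m ≤ f n →
        v m p ≤ 1 / ((f n : ℝ) + 1) ∧ r m p ≤ 1 / ((k:ℝ)+1)) :
    ∀ k : ℕ, ∀ f : ℕ → ℕ, Monotone f → ∃ p ∈ Ω, ∃ n ≤ ThetaXu L G Ψ D k f,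
      ∀ m : ℕ, n ≤ m → m ≤ f n → s m p ≤ 1 / ((k:ℝ)+1) :=
  quantitative_xu_lemma_families_general Ω lam hlam s v r γ hγ0 hrec D L G hL Ψ hi hii hiii hiv
end

section
/- Let H be a real Hilbert space, T : H → 2^H a maximal monotone operator with s ∈ S := T⁻¹(0), and let (z_n) be generated by (mPPA): z_{n+1} = λ_n u + γ_n z_n + δ_n J_{c_n}(z_n) + e_n, where u, z₀ ∈ H, (λ_n), (γ_n), (δ_n) ⊂ (0,1) with λ_n + γ_n + δ_n = 1, c_n > 0, e_n ∈ H. Assume a, c ∈ ℕ \ {0} and monotone functions ℓ, E : ℕ → ℕ satisfy: λ_n ≤ 1/(k+1) for all n ≥ ℓ(k); 1/a ≤ γ_m ≤ 1 − 1/a for all m; c_n ≥ 1/c for all n; ∑_{i=E(k)+1}^{E(k)+n} ‖e_i‖ ≤ 1/(k+1) for all k, n. Let N₁ ≥ ‖u‖, N₂ ≥ ∑_{i=0}^{E(0)} ‖e_i‖ + 1, N₃ ≥ max{‖u − s‖, ‖z₀ − s‖}, N₀ := N₂ + N₃, and let (w_n) be such that z_{n+1} = γ_n z_n + (1 − γ_n)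 w_n. Suppose χ : ℕ → ℕ is a monotone function such that ‖w_m − z_m‖ ≤ 1/(k+1) for all k and all m ≥ χ(k). Then for every k ∈ ℕ: (i) ‖z_{m+1} − z_m‖ ≤ 1/(k+1) for all m ≥ χ(k); (ii) ‖J_{c_m}(z_m) − z_m‖ ≤ 1/(k+1) for all m ≥ max{μ(k), χ(2a(k+1))}; (iii) ‖J_{1/c}(z_m) − z_m‖ ≤ 1/(k+1) for all m ≥ max{μ(2k+1), χ(4a(k+1))}; where μ(k) := max{ ℓ(4a(k+1)(N₀+N₃)), E(4a(k+1)) + 1 }. -/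
/-!
Because `s` is a zero of `T`, every resolvent is nonexpansive towards `s`, so the iterates stay
within `N₃ + ∑ ‖eᵢ‖ ≤ N₂ + N₃` of `s`. Eliminating `z (m+1)` between its two expressions gives
`(1 - γₘ)(J zₘ - wₘ) = λₘ (J zₘ - u) - eₘ`, and since `1 - γₘ ≥ 1/a` this bounds `‖J zₘ - zₘ‖` by
`a (λₘ ‖J zₘ - u‖ + ‖eₘ‖) + ‖wₘ - zₘ‖`, three terms controlled by the rates of `λ`, `e` and
`w - z`. Finally `c ↦ ‖J c x - x‖` is nondecreasing, which moves the bound from `cₘ ≥ 1/c` to `1/c`.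
-/

open scoped Pointwise RealInnerProductSpace

/-- A set-valued operator `T : H → Set H` is monotone. -/
def IsMonotoneOp {H : Type*} [NormedAddCommGroup H] [InnerProductSpace ℝ H]
    (T : H → Set H) : Prop :=
  ∀ x x' y y' : H, y ∈ T x → y' ∈ T x' → 0 ≤ ⟪x - x', y - y'⟫

/-- `T` is maximal monotone. -/
def IsMaximalMonotoneOp {H : Type*} [NormedAddCommGroup H] [InnerProductSpace ℝ H]
    (T : H → Set H) : Prop :=
  IsMonotoneOp T ∧ ∀ T' : H → Set H, IsMonotoneOp T' → (∀ x, T x ⊆ T' x) → T' = T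

/-- `J` is the family of resolvents of `T`: `J c = (I + c T)⁻¹` for `c > 0`. -/
def IsResolventFamilyOf {H : Type*} [NormedAddCommGroup H] [InnerProductSpace ℝ H]
    (J : ℝ → H → H) (T : H → Set H) : Prop :=
  ∀ c : ℝ, 0 < c → ∀ x : H, x - J c x ∈ c • T (J c x)

/-- `μ(k) := max{ℓ(4a(k+1)(N₀+N₃)), E(4a(k+1))+1}`. -/
def muFun (ℓ E : ℕ → ℕ) (a N₀ N₃ k : ℕ) : ℕ :=
  max (ℓ (4*a*(k+1)*(N₀+N₃))) (E (4*a*(k+1)) + 1)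

open Finset

namespace IsResolventFamilyOf

variable {H : Type*} [NormedAddCommGroup H] [InnerProductSpace ℝ H]
  {T : H → Set H} {J : ℝ → H → H}

theorem inv_smul_sub_mem (hJ : IsResolventFamilyOf J T) {c : ℝ} (hc : 0 < c) (x : H) :
    c⁻¹ • (x - J c x) ∈ T (J c x) := by
  obtain ⟨y, hy, hcy⟩ := Set.mem_smul_set.mp (hJ c hc x)
  rwa [← hcy, inv_smul_smul₀ hc.ne']

theorem norm_sub_le_of_zero_mem (hJ : IsResolventFamilyOf J T) (hT : IsMonotoneOp T)
    {s : H} (hs : (0 : H) ∈ T s) {c : ℝ} (hc : 0 < c) (x : H) :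
    ‖J c x - s‖ ≤ ‖x - s‖ := by
  have hmono := hT _ _ _ _ (hJ.inv_smul_sub_mem hc x) hs
  rw [sub_zero, real_inner_smul_right] at hmono
  have hfirm : ‖J c x - s‖ ^ 2 ≤ ⟪J c x - s, x - s⟫ := by
    rw [show x - s = (x - J c x) + (J c x - s) by abel, inner_add_right,
      real_inner_self_eq_norm_sq]
    nlinarith [inv_pos.mpr hc]
  nlinarith [real_inner_le_norm (J c x - s) (x - s), norm_nonneg (J c x - s),
    norm_nonneg (x - s)]

theorem norm_sub_self_le_of_le (hJ : IsResolventFamilyOf J T) (hT : IsMonotoneOp T)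
    (x : H) {c d : ℝ} (hc : 0 < c) (hcd : c ≤ d) :
    ‖J c x - x‖ ≤ ‖J d x - x‖ := by
  have hd : 0 < d := hc.trans_le hcd
  have hmono := hT _ _ _ _ (hJ.inv_smul_sub_mem hc x) (hJ.inv_smul_sub_mem hd x)
  rw [show J c x - J d x = (x - J d x) - (x - J c x) by abel] at hmono
  rw [norm_sub_rev (J c x), norm_sub_rev (J d x)]
  generalize x - J c x = p, x - J d x = q at hmono ⊢
  have hscaled : 0 ≤ ⟪q - p, d • p - c • q⟫ := by
    have : d • p - c • q = (c * d) • (c⁻¹ • p - d⁻¹ • q) := by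
      rw [smul_sub, smul_smul, smul_smul, mul_inv_cancel_right₀ hd.ne', mul_comm c d,
        mul_inv_cancel_right₀ hc.ne']
    rw [this, real_inner_smul_right]
    positivity
  have hquad : d * ‖p‖ ^ 2 + c * ‖q‖ ^ 2 ≤ (c + d) * (‖p‖ * ‖q‖) := by
    have hexp : ⟪q - p, d • p - c • q⟫ = (c + d) * ⟪p, q⟫ - d * ‖p‖ ^ 2 - c * ‖q‖ ^ 2 := by
      simp only [inner_sub_left, inner_sub_right, real_inner_smul_right,
        real_inner_self_eq_norm_sq, real_inner_comm p q]
      ring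
    nlinarith [real_inner_le_norm p q]
  -- `hquad` says `(d‖p‖ - c‖q‖)(‖p‖ - ‖q‖) ≤ 0`, and `d‖p‖ - c‖q‖ > 0` once `‖p‖ > ‖q‖`
  by_contra! hlt
  have hpos : 0 < ‖p‖ - ‖q‖ := sub_pos.mpr hlt
  nlinarith [mul_pos hd (mul_pos hpos hpos),
    mul_nonneg (mul_nonneg (sub_nonneg.mpr hcd) (norm_nonneg q)) hpos.le]

end IsResolventFamilyOf

theorem sum_range_le_add_of_sum_Icc_le {f : ℕ → ℝ} (hf : ∀ i, 0 ≤ f i) {M : ℕ} {B : ℝ}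
    (h : ∀ n, ∑ i ∈ Icc (M + 1) (M + n), f i ≤ B) (n : ℕ) :
    ∑ i ∈ range n, f i ≤ ∑ i ∈ range (M + 1), f i + B :=
  calc ∑ i ∈ range n, f i ≤ ∑ i ∈ range (M + 1 + n), f i :=
        sum_le_sum_of_subset_of_nonneg (range_mono (by omega)) fun i _ _ ↦ hf i
    _ = ∑ i ∈ range (M + 1), f i + ∑ i ∈ Icc (M + 1) (M + n), f i := by
        rw [← sum_range_add_sum_Ico _ (by omega : M + 1 ≤ M + 1 + n),
          show M + 1 + n = M + n + 1 by omega, Ico_add_one_right_eq_Icc]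
    _ ≤ ∑ i ∈ range (M + 1), f i + B := (add_le_add_iff_left _).mpr (h n)

theorem le_of_forall_sum_Icc_le {f : ℕ → ℝ} (hf : ∀ i, 0 ≤ f i) {M : ℕ} {B : ℝ}
    (h : ∀ n, ∑ i ∈ Icc (M + 1) (M + n), f i ≤ B) {m : ℕ} (hm : M + 1 ≤ m) : f m ≤ B := by
  refine le_trans ?_ (h (m - M))
  exact single_le_sum (fun i _ ↦ hf i) (mem_Icc.mpr ⟨hm, by omega⟩)

section Iteration

variable {E : Type*} [SeminormedAddCommGroup E] [NormedSpace ℝ E]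

theorem norm_smul_add_smul_add_smul_le {x y v : E} {a b c M : ℝ} (ha : 0 ≤ a) (hb : 0 ≤ b)
    (hc : 0 ≤ c) (habc : a + b + c = 1) (hx : ‖x‖ ≤ M) (hy : ‖y‖ ≤ M) (hv : ‖v‖ ≤ M) :
    ‖a • x + b • y + c • v‖ ≤ M :=
  calc ‖a • x + b • y + c • v‖ ≤ ‖a • x‖ + ‖b • y‖ + ‖c • v‖ := norm_add₃_le
    _ = a * ‖x‖ + b * ‖y‖ + c * ‖v‖ := by
      rw [norm_smul_of_nonneg ha, norm_smul_of_nonneg hb, norm_smul_of_nonneg hc]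
    _ ≤ a * M + b * M + c * M := by gcongr
    _ = M := by linear_combination M * habc

theorem norm_sub_le_add_sum_of_mPPA {u s : E} {lam gam del : ℕ → ℝ} {R : ℕ → E → E}
    {e z : ℕ → E} (hlam : ∀ n, 0 ≤ lam n) (hgam : ∀ n, 0 ≤ gam n) (hdel : ∀ n, 0 ≤ del n)
    (hsum : ∀ n, lam n + gam n + del n = 1) (hR : ∀ n x, ‖R n x - s‖ ≤ ‖x - s‖)
    (hz : ∀ n, z (n + 1) = lam n • u + gam n • z n + del n • R n (z n) + e n)
    {M : ℝ} (hu : ‖u - s‖ ≤ M) (hz₀ : ‖z 0 - s‖ ≤ M) (n : ℕ) :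
    ‖z n - s‖ ≤ M + ∑ i ∈ range n, ‖e i‖ := by
  induction n with
  | zero => simpa using hz₀
  | succ n ih =>
    have hS : 0 ≤ ∑ i ∈ range n, ‖e i‖ := sum_nonneg fun i _ ↦ norm_nonneg (e i)
    have hsplit : z (n + 1) - s =
        (lam n • (u - s) + gam n • (z n - s) + del n • (R n (z n) - s)) + e n := by
      rw [hz n]
      linear_combination (norm := module) (hsum n) • s
    rw [hsplit, sum_range_succ, ← add_assoc]
    refine (norm_add_le _ _).trans (add_le_add_left ?_ _)
    exact norm_smul_add_smul_add_smul_le (hlam n) (hgam n) (hdel n) (hsum n)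
      (hu.trans (le_add_of_nonneg_right hS)) ih ((hR n (z n)).trans ih)

theorem norm_sub_le_of_eq_smul_add_smul {x y w : E} {γ : ℝ} (hγ : γ ∈ Set.Icc 0 1)
    (hy : y = γ • x + (1 - γ) • w) : ‖y - x‖ ≤ ‖w - x‖ := by
  rw [show y - x = (1 - γ) • (w - x) by rw [hy]; module,
    norm_smul_of_nonneg (sub_nonneg.mpr hγ.2)]
  exact mul_le_of_le_one_left (norm_nonneg _) (by linarith [hγ.1])

theorem norm_sub_le_of_mPPA_step {u z z' w v e : E} {lam gam del A : ℝ} (hlam : 0 ≤ lam)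
    (hsum : lam + gam + del = 1) (hA : 0 < A) (hgam : gam ≤ 1 - 1 / A)
    (hz' : z' = lam • u + gam • z + del • v + e) (hw : z' = gam • z + (1 - gam) • w) :
    ‖v - z‖ ≤ A * (lam * ‖v - u‖ + ‖e‖) + ‖w - z‖ := by
  have key : (1 - gam) • (v - w) = lam • (v - u) - e := by
    linear_combination (norm := module) hw - hz' - hsum • v
  have hA1 : 1 ≤ A * (1 - gam) := by
    rw [mul_comm, ← div_le_iff₀ hA]
    linarith
  have hgam₁ : 0 ≤ 1 - gam := by linarith [one_div_pos.mpr hA]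
  calc ‖v - z‖ ≤ ‖v - w‖ + ‖w - z‖ := norm_sub_le_norm_sub_add_norm_sub v w z
    _ ≤ A * ((1 - gam) * ‖v - w‖) + ‖w - z‖ := by
      rw [← mul_assoc]; gcongr; exact le_mul_of_one_le_left (norm_nonneg _) hA1
    _ = A * ‖lam • (v - u) - e‖ + ‖w - z‖ := by
      rw [← key, norm_smul_of_nonneg hgam₁]
    _ ≤ A * (lam * ‖v - u‖ + ‖e‖) + ‖w - z‖ := by
      gcongr
      exact (norm_sub_le _ _).trans_eq (by rw [norm_smul_of_nonneg hlam])

end Iteration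

theorem mul_le_one_div_of_le_one_div_mul_add_one {x t y : ℝ} (ht : 0 ≤ t) (hy : 0 < y)
    (hx : x ≤ 1 / (y * t + 1)) : t * x ≤ 1 / y :=
  calc t * x ≤ t * (1 / (y * t + 1)) := mul_le_mul_of_nonneg_left hx ht
    _ ≤ 1 / y := by
      rw [mul_one_div, div_le_div_iff₀ (by positivity) hy]
      linarith

theorem mul_add_add_le_of_rates {A B K lam p ε d : ℝ} (hA : 1 ≤ A) (hB : 0 ≤ B) (hK : 0 ≤ K)
    (hlam₀ : 0 ≤ lam) (hp : p ≤ B) (hlam : lam ≤ 1 / (4 * A * (K + 1) * B + 1))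
    (hε : ε ≤ 1 / (4 * A * (K + 1) + 1)) (hd : d ≤ 1 / (2 * A * (K + 1) + 1)) :
    A * (lam * p + ε) + d ≤ 1 / (K + 1) := by
  have hlamB : A * B * lam ≤ 1 / (4 * (K + 1)) :=
    mul_le_one_div_of_le_one_div_mul_add_one (by positivity) (by positivity)
      (by convert hlam using 3; ring)
  have hAε : A * ε ≤ 1 / (4 * (K + 1)) :=
    mul_le_one_div_of_le_one_div_mul_add_one (by positivity) (by positivity)
      (by convert hε using 3; ring)
  have hd' : d ≤ 1 / (2 * (K + 1)) :=
    hd.trans (one_div_le_one_div_of_le (by positivity) (by nlinarith))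
  calc A * (lam * p + ε) + d ≤ A * B * lam + A * ε + d := by
        have := mul_le_mul_of_nonneg_left (mul_le_mul_of_nonneg_left hp hlam₀)
          (zero_le_one.trans hA)
        linarith
    _ ≤ 1 / (4 * (K + 1)) + 1 / (4 * (K + 1)) + 1 / (2 * (K + 1)) := by gcongr
    _ = 1 / (K + 1) := by field_simp; ring

theorem mPPA_asymptotic_regularity_rates_general
    {H : Type*} [NormedAddCommGroup H] [InnerProductSpace ℝ H]
    (T : H → Set H) (hT : IsMaximalMonotoneOp T)
    (J : ℝ → H → H) (hJ : IsResolventFamilyOf J T)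
    (s : H) (hsS : (0:H) ∈ T s)
    (u : H) (lam gam del cs : ℕ → ℝ) (e : ℕ → H) (z w : ℕ → H)
    (hlam01 : ∀ n, lam n ∈ Set.Ioo (0:ℝ) 1)
    (hgam01 : ∀ n, gam n ∈ Set.Ioo (0:ℝ) 1)
    (hdel01 : ∀ n, del n ∈ Set.Ioo (0:ℝ) 1)
    (hsum1 : ∀ n, lam n + gam n + del n = 1)
    (hcs0 : ∀ n, 0 < cs n)
    (hmPPA : ∀ n, z (n+1) = lam n • u + gam n • z n + del n • J (cs n) (z n) + e n)
    (a c : ℕ) (ha : 0 < a) (hc : 0 < c)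
    (ℓ E : ℕ → ℕ)
    (Q1 : ∀ k n : ℕ, ℓ k ≤ n → lam n ≤ 1 / ((k:ℝ)+1))
    (Q3 : ∀ m : ℕ, 1 / (a:ℝ) ≤ gam m ∧ gam m ≤ 1 - 1 / (a:ℝ))
    (Q4 : ∀ n, 1 / (c:ℝ) ≤ cs n)
    (Q6 : ∀ k n : ℕ, ∑ i ∈ Finset.Icc (E k + 1) (E k + n), ‖e i‖ ≤ 1 / ((k:ℝ)+1))
    (N₂ N₃ : ℕ)
    (hN₂ : (∑ i ∈ Finset.range (E 0 + 1), ‖e i‖) + 1 ≤ (N₂ : ℝ))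
    (hN₃u : ‖u - s‖ ≤ (N₃ : ℝ)) (hN₃z : ‖z 0 - s‖ ≤ (N₃ : ℝ))
    (hw : ∀ n, z (n+1) = gam n • z n + (1 - gam n) • w n)
    (χ : ℕ → ℕ)
    (hχ : ∀ k m : ℕ, χ k ≤ m → ‖w m - z m‖ ≤ 1 / ((k:ℝ)+1)) :
    ∀ k : ℕ,
      (∀ m : ℕ, χ k ≤ m → ‖z (m+1) - z m‖ ≤ 1 / ((k:ℝ)+1)) ∧
      (∀ m : ℕ, max (muFun ℓ E a (N₂+N₃) N₃ k) (χ (2*a*(k+1))) ≤ m →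
        ‖J (cs m) (z m) - z m‖ ≤ 1 / ((k:ℝ)+1)) ∧
      (∀ m : ℕ, max (muFun ℓ E a (N₂+N₃) N₃ (2*k+1)) (χ (4*a*(k+1))) ≤ m →
        ‖J (1 / (c:ℝ)) (z m) - z m‖ ≤ 1 / ((k:ℝ)+1)) := by
  have hres n := hJ.norm_sub_le_of_zero_mem hT.1 hsS (hcs0 n)
  have hbdd n : ‖z n - s‖ ≤ N₂ + N₃ := by
    have := norm_sub_le_add_sum_of_mPPA (fun n ↦ (hlam01 n).1.le) (fun n ↦ (hgam01 n).1.le)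
      (fun n ↦ (hdel01 n).1.le) hsum1 hres hmPPA hN₃u hN₃z n
    have := sum_range_le_add_of_sum_Icc_le (B := 1) (fun i ↦ norm_nonneg (e i))
      (fun n ↦ by simpa using Q6 0 n) n
    linarith
  have hii (k m : ℕ) (hm : max (muFun ℓ E a (N₂+N₃) N₃ k) (χ (2*a*(k+1))) ≤ m) :
      ‖J (cs m) (z m) - z m‖ ≤ 1 / ((k:ℝ)+1) := by
    simp only [muFun, max_le_iff] at hm
    have hlam := Q1 _ m hm.1.1
    have he := le_of_forall_sum_Icc_le (fun i ↦ norm_nonneg (e i)) (Q6 _) hm.1.2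
    have hwz := hχ _ m hm.2
    have hvu : ‖J (cs m) (z m) - u‖ ≤ N₂ + N₃ + N₃ :=
      (norm_sub_le_norm_sub_add_norm_sub _ s u).trans <| by
        rw [norm_sub_rev s]; linarith [hres m (z m), hbdd m]
    push_cast at hlam he hwz
    have ha₁ : (1 : ℝ) ≤ a := by exact_mod_cast ha
    exact (norm_sub_le_of_mPPA_step (hlam01 m).1.le (hsum1 m) (by positivity) (Q3 m).2
      (hmPPA m) (hw m)).trans <|
      mul_add_add_le_of_rates ha₁ (by positivity) (by positivity) (hlam01 m).1.le hvu hlam he hwz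
  refine fun k ↦ ⟨fun m hm ↦ ?_, hii k, fun m hm ↦ ?_⟩
  · exact (norm_sub_le_of_eq_smul_add_smul (Set.Ioo_subset_Icc_self (hgam01 m)) (hw m)).trans
      (hχ k m hm)
  · have h := hii (2 * k + 1) m (by rwa [show 2 * a * (2 * k + 1 + 1) = 4 * a * (k + 1) by ring])
    calc ‖J (1 / (c:ℝ)) (z m) - z m‖ ≤ ‖J (cs m) (z m) - z m‖ :=
          hJ.norm_sub_self_le_of_le hT.1 (z m) (by positivity) (Q4 m)
      _ ≤ 1 / (((2 * k + 1 : ℕ) : ℝ) + 1) := h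
      _ ≤ 1 / ((k:ℝ)+1) := by gcongr; linarith

/-- Corollary 4.4: rates of asymptotic regularity for the mPPA iteration. -/
theorem mPPA_asymptotic_regularity_rates
    {H : Type*} [NormedAddCommGroup H] [InnerProductSpace ℝ H] [CompleteSpace H]
    (T : H → Set H) (hT : IsMaximalMonotoneOp T)
    (J : ℝ → H → H) (hJ : IsResolventFamilyOf J T)
    (s : H) (hsS : (0:H) ∈ T s)
    (u : H) (lam gam del cs : ℕ → ℝ) (e : ℕ → H) (z w : ℕ → H)
    (hlam01 : ∀ n, lam n ∈ Set.Ioo (0:ℝ) 1)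
    (hgam01 : ∀ n, gam n ∈ Set.Ioo (0:ℝ) 1)
    (hdel01 : ∀ n, del n ∈ Set.Ioo (0:ℝ) 1)
    (hsum1 : ∀ n, lam n + gam n + del n = 1)
    (hcs0 : ∀ n, 0 < cs n)
    (hmPPA : ∀ n, z (n+1) = lam n • u + gam n • z n + del n • J (cs n) (z n) + e n)
    (a c : ℕ) (ha : 0 < a) (hc : 0 < c)
    (ℓ E : ℕ → ℕ) (hℓ : Monotone ℓ) (hE : Monotone E)
    (Q1 : ∀ k n : ℕ, ℓ k ≤ n → lam n ≤ 1 / ((k:ℝ)+1))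
    (Q3 : ∀ m : ℕ, 1 / (a:ℝ) ≤ gam m ∧ gam m ≤ 1 - 1 / (a:ℝ))
    (Q4 : ∀ n, 1 / (c:ℝ) ≤ cs n)
    (Q6 : ∀ k n : ℕ, ∑ i ∈ Finset.Icc (E k + 1) (E k + n), ‖e i‖ ≤ 1 / ((k:ℝ)+1))
    (N₁ N₂ N₃ : ℕ)
    (hN₁ : ‖u‖ ≤ (N₁ : ℝ))
    (hN₂ : (∑ i ∈ Finset.range (E 0 + 1), ‖e i‖) + 1 ≤ (N₂ : ℝ))
    (hN₃u : ‖u - s‖ ≤ (N₃ : ℝ)) (hN₃z : ‖z 0 - s‖ ≤ (N₃ : ℝ))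
    (hw : ∀ n, z (n+1) = gam n • z n + (1 - gam n) • w n)
    (χ : ℕ → ℕ) (hχmono : Monotone χ)
    (hχ : ∀ k m : ℕ, χ k ≤ m → ‖w m - z m‖ ≤ 1 / ((k:ℝ)+1)) :
    ∀ k : ℕ,
      (∀ m : ℕ, χ k ≤ m → ‖z (m+1) - z m‖ ≤ 1 / ((k:ℝ)+1)) ∧
      (∀ m : ℕ, max (muFun ℓ E a (N₂+N₃) N₃ k) (χ (2*a*(k+1))) ≤ m →
        ‖J (cs m) (z m) - z m‖ ≤ 1 / ((k:ℝ)+1)) ∧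
      (∀ m : ℕ, max (muFun ℓ E a (N₂+N₃) N₃ (2*k+1)) (χ (4*a*(k+1))) ≤ m →
        ‖J (1 / (c:ℝ)) (z m) - z m‖ ≤ 1 / ((k:ℝ)+1)) :=
  mPPA_asymptotic_regularity_rates_general T hT J hJ s hsS u lam gam del cs e z w hlam01 hgam01
    hdel01 hsum1 hcs0 hmPPA a c ha hc ℓ E Q1 Q3 Q4 Q6 N₂ N₃ hN₂ hN₃u hN₃z hw χ hχ
end
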